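/- Let S and T be semigroups. An (S,T)-biact A is stable if and only if J = L∘R on A (i.e. a J b iff there is c with a L c and c R b), ≤_L ∩ R = L ∩ R, and L ∩ ≤_R = L ∩ R. -/
import Mathlib


/-! Green's preorders and equivalences on an `(S,T)`-biact, given by the left
action `sm : S → A → A` and the right action `rm : A → T → A`. -/

section BiactDefs

variable {S T A : Type*}

/-- `a ≤_L b` iff `a = b` or `a = s · b` for some `s ∈ S`. -/
def leLAct (sm : S → A → A) (a b : A) : Prop :=
  a = b ∨ ∃ s, a = sm s b

/-- `a ≤_R b` iff `a = b` or `a = b · t` for some `t ∈ T`. -/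
def leRAct (rm : A → T → A) (a b : A) : Prop :=
  a = b ∨ ∃ t, a = rm b t

/-- `a ≤_J b` iff `a = b`, or `a = s · b`, or `a = b · t`, or `a = s · b · t`. -/
def leJAct (sm : S → A → A) (rm : A → T → A) (a b : A) : Prop :=
  a = b ∨ (∃ s, a = sm s b) ∨ (∃ t, a = rm b t) ∨ ∃ s t, a = rm (sm s b) t

/-- Green's relation `L` on a biact. -/
def eqvLAct (sm : S → A → A) (a b : A) : Prop :=
  leLAct sm a b ∧ leLAct sm b a

/-- Green's relation `R` on a biact. -/
def eqvRAct (rm : A → T → A) (a b : A) : Prop :=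
  leRAct rm a b ∧ leRAct rm b a

/-- Green's relation `J` on a biact. -/
def eqvJAct (sm : S → A → A) (rm : A → T → A) (a b : A) : Prop :=
  leJAct sm rm a b ∧ leJAct sm rm b a

/-- `(sm, rm)` constitutes an `(S,T)`-biact structure on `A`. -/
def IsBiact [Semigroup S] [Semigroup T] (sm : S → A → A) (rm : A → T → A) : Prop :=
  (∀ (s s' : S) (a : A), sm s (sm s' a) = sm (s * s') a) ∧
  (∀ (a : A) (t t' : T), rm (rm a t) t' = rm a (t * t')) ∧
  (∀ (s : S) (a : A) (t : T), rm (sm s a) t = sm s (rm a t))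

/-- The minimal condition `M_L`: every descending `≤_L`-chain eventually stabilises. -/
def MinLAct (sm : S → A → A) : Prop :=
  ∀ f : ℕ → A, (∀ n, leLAct sm (f (n + 1)) (f n)) →
    ∃ m, ∀ n ≥ m, eqvLAct sm (f m) (f n)

/-- The minimal condition `M_R`. -/
def MinRAct (rm : A → T → A) : Prop :=
  ∀ f : ℕ → A, (∀ n, leRAct rm (f (n + 1)) (f n)) →
    ∃ m, ∀ n ≥ m, eqvRAct rm (f m) (f n)

/-- The minimal condition `M_J`. -/
def MinJAct (sm : S → A → A) (rm : A → T → A) : Prop :=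
  ∀ f : ℕ → A, (∀ n, leJAct sm rm (f (n + 1)) (f n)) →
    ∃ m, ∀ n ≥ m, eqvJAct sm rm (f m) (f n)

/-- A biact is left stable if `(s · a) J a` implies `(s · a) L a`. -/
def LeftStableAct (sm : S → A → A) (rm : A → T → A) : Prop :=
  ∀ (a : A) (s : S), eqvJAct sm rm (sm s a) a → eqvLAct sm (sm s a) a

/-- A biact is right stable if `(a · t) J a` implies `(a · t) R a`. -/
def RightStableAct (sm : S → A → A) (rm : A → T → A) : Prop :=
  ∀ (a : A) (t : T), eqvJAct sm rm (rm a t) a → eqvRAct rm (rm a t) a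

/-- A biact is stable if it is left and right stable. -/
def StableAct (sm : S → A → A) (rm : A → T → A) : Prop :=
  LeftStableAct sm rm ∧ RightStableAct sm rm

/-- A biact is `L`-periodic if for all `s, a` there is `n ≥ 1` with `(sⁿ · a) L (sⁿ⁺¹ · a)`. -/
def LPeriodicAct (sm : S → A → A) : Prop :=
  ∀ (s : S) (a : A), ∃ n : ℕ, 1 ≤ n ∧ eqvLAct sm ((sm s)^[n] a) ((sm s)^[n + 1] a)

/-- A biact is `R`-periodic if for all `t, a` there is `n ≥ 1` with `(a · tⁿ) R (a · tⁿ⁺¹)`. -/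
def RPeriodicAct (rm : A → T → A) : Prop :=
  ∀ (t : T) (a : A), ∃ n : ℕ, 1 ≤ n ∧
    eqvRAct rm ((fun x => rm x t)^[n] a) ((fun x => rm x t)^[n + 1] a)

end BiactDefs

section AuxLemmas

variable {S T A : Type*} [Semigroup S] [Semigroup T] {sm : S → A → A} {rm : A → T → A}

lemma leL_refl' (a : A) : leLAct sm a a := Or.inl rfl

lemma leR_refl' (a : A) : leRAct rm a a := Or.inl rfl

lemma leL_trans' (hss : ∀ (s s' : S) (a : A), sm s (sm s' a) = sm (s * s') a)
    {a b c : A} (h1 : leLAct sm a b) (h2 : leLAct sm b c) : leLAct sm a c := by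
  rcases h1 with rfl | ⟨s, rfl⟩
  · exact h2
  · rcases h2 with rfl | ⟨s', rfl⟩
    · exact Or.inr ⟨s, rfl⟩
    · exact Or.inr ⟨s * s', hss s s' c⟩

lemma leR_trans' (hrr : ∀ (a : A) (t t' : T), rm (rm a t) t' = rm a (t * t'))
    {a b c : A} (h1 : leRAct rm a b) (h2 : leRAct rm b c) : leRAct rm a c := by
  rcases h1 with rfl | ⟨t, rfl⟩
  · exact h2
  · rcases h2 with rfl | ⟨t', rfl⟩
    · exact Or.inr ⟨t, rfl⟩
    · exact Or.inr ⟨t' * t, hrr c t' t⟩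

lemma leJ_of_leL' {a b : A} (rm : A → T → A) (h : leLAct sm a b) : leJAct sm rm a b :=
  h.imp id Or.inl

lemma leJ_of_leR' {a b : A} (sm : S → A → A) (h : leRAct rm a b) : leJAct sm rm a b :=
  h.imp id fun ht => Or.inr (Or.inl ht)

lemma leJ_of_sm' (hss : ∀ (s s' : S) (a : A), sm s (sm s' a) = sm (s * s') a)
    (hsr : ∀ (s : S) (a : A) (t : T), rm (sm s a) t = sm s (rm a t))
    {a b : A} (s : S) (h : leJAct sm rm a b) : leJAct sm rm (sm s a) b := by
  rcases h with rfl | ⟨s', rfl⟩ | ⟨t, rfl⟩ | ⟨s', t, rfl⟩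
  · exact Or.inr (Or.inl ⟨s, rfl⟩)
  · exact Or.inr (Or.inl ⟨s * s', hss s s' b⟩)
  · exact Or.inr (Or.inr (Or.inr ⟨s, t, (hsr s b t).symm⟩))
  · exact Or.inr (Or.inr (Or.inr ⟨s * s', t, by simp only [hsr, hss]⟩))

lemma leJ_of_rm' (hrr : ∀ (a : A) (t t' : T), rm (rm a t) t' = rm a (t * t'))
    {a b : A} (t : T) (h : leJAct sm rm a b) : leJAct sm rm (rm a t) b := by
  rcases h with rfl | ⟨s, rfl⟩ | ⟨t', rfl⟩ | ⟨s, t', rfl⟩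
  · exact Or.inr (Or.inr (Or.inl ⟨t, rfl⟩))
  · exact Or.inr (Or.inr (Or.inr ⟨s, t, rfl⟩))
  · exact Or.inr (Or.inr (Or.inl ⟨t' * t, hrr b t' t⟩))
  · exact Or.inr (Or.inr (Or.inr ⟨s, t' * t, hrr (sm s b) t' t⟩))

lemma leJ_trans' (hss : ∀ (s s' : S) (a : A), sm s (sm s' a) = sm (s * s') a)
    (hrr : ∀ (a : A) (t t' : T), rm (rm a t) t' = rm a (t * t'))
    (hsr : ∀ (s : S) (a : A) (t : T), rm (sm s a) t = sm s (rm a t))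
    {a b c : A} (h1 : leJAct sm rm a b) (h2 : leJAct sm rm b c) : leJAct sm rm a c := by
  rcases h1 with rfl | ⟨s, rfl⟩ | ⟨t, rfl⟩ | ⟨s, t, rfl⟩
  · exact h2
  · exact leJ_of_sm' hss hsr s h2
  · exact leJ_of_rm' hrr t h2
  · exact leJ_of_rm' hrr t (leJ_of_sm' hss hsr s h2)

lemma eqvL_refl' (a : A) : eqvLAct sm a a := ⟨Or.inl rfl, Or.inl rfl⟩

lemma eqvR_refl' (a : A) : eqvRAct rm a a := ⟨Or.inl rfl, Or.inl rfl⟩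

lemma eqvL_symm' {a b : A} (h : eqvLAct sm a b) : eqvLAct sm b a := ⟨h.2, h.1⟩

lemma eqvR_symm' {a b : A} (h : eqvRAct rm a b) : eqvRAct rm b a := ⟨h.2, h.1⟩

lemma eqvJ_symm' {a b : A} (h : eqvJAct sm rm a b) : eqvJAct sm rm b a := ⟨h.2, h.1⟩

lemma eqvL_trans' (hss : ∀ (s s' : S) (a : A), sm s (sm s' a) = sm (s * s') a)
    {a b c : A} (h1 : eqvLAct sm a b) (h2 : eqvLAct sm b c) : eqvLAct sm a c :=
  ⟨leL_trans' hss h1.1 h2.1, leL_trans' hss h2.2 h1.2⟩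

lemma eqvR_trans' (hrr : ∀ (a : A) (t t' : T), rm (rm a t) t' = rm a (t * t'))
    {a b c : A} (h1 : eqvRAct rm a b) (h2 : eqvRAct rm b c) : eqvRAct rm a c :=
  ⟨leR_trans' hrr h1.1 h2.1, leR_trans' hrr h2.2 h1.2⟩

lemma eqvJ_trans' (hss : ∀ (s s' : S) (a : A), sm s (sm s' a) = sm (s * s') a)
    (hrr : ∀ (a : A) (t t' : T), rm (rm a t) t' = rm a (t * t'))
    (hsr : ∀ (s : S) (a : A) (t : T), rm (sm s a) t = sm s (rm a t))
    {a b c : A} (h1 : eqvJAct sm rm a b) (h2 : eqvJAct sm rm b c) : eqvJAct sm rm a c :=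
  ⟨leJ_trans' hss hrr hsr h1.1 h2.1, leJ_trans' hss hrr hsr h2.2 h1.2⟩

lemma eqvJ_of_eqvL' {a b : A} (rm : A → T → A) (h : eqvLAct sm a b) : eqvJAct sm rm a b :=
  ⟨leJ_of_leL' rm h.1, leJ_of_leL' rm h.2⟩

lemma eqvJ_of_eqvR' {a b : A} (sm : S → A → A) (h : eqvRAct rm a b) : eqvJAct sm rm a b :=
  ⟨leJ_of_leR' sm h.1, leJ_of_leR' sm h.2⟩

end AuxLemmas

/-- A biact is stable iff `J = L ∘ R`, `≤_L ∩ R = L ∩ R` and `L ∩ ≤_R = L ∩ R`. -/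
theorem stable_iff_d_eq_j {S T A : Type*} [Semigroup S] [Semigroup T]
    (sm : S → A → A) (rm : A → T → A) (hbi : IsBiact sm rm) :
    StableAct sm rm ↔
      ((∀ a b : A, eqvJAct sm rm a b ↔ ∃ c : A, eqvLAct sm a c ∧ eqvRAct rm c b) ∧
       (∀ a b : A, (leLAct sm a b ∧ eqvRAct rm a b) ↔ (eqvLAct sm a b ∧ eqvRAct rm a b)) ∧
       (∀ a b : A, (eqvLAct sm a b ∧ leRAct rm a b) ↔ (eqvLAct sm a b ∧ eqvRAct rm a b))) := by
  obtain ⟨hss, hrr, hsr⟩ := hbi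
  constructor
  · rintro ⟨hls, hrs⟩
    refine ⟨?_, ?_, ?_⟩
    · intro a b
      refine ⟨fun h => ?_, fun ⟨c, hac, hcb⟩ =>
        eqvJ_trans' hss hrr hsr (eqvJ_of_eqvL' rm hac) (eqvJ_of_eqvR' sm hcb)⟩
      rcases h.2 with rfl | ⟨s, rfl⟩ | ⟨t, rfl⟩ | ⟨s, t, rfl⟩
      · exact ⟨_, eqvL_refl' _, eqvR_refl' _⟩
      · exact ⟨sm s a, eqvL_symm' (hls a s ⟨h.2, h.1⟩), eqvR_refl' _⟩
      · exact ⟨a, eqvL_refl' a, eqvR_symm' (hrs a t ⟨h.2, h.1⟩)⟩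
      · have hsa_le_a : leJAct sm rm (sm s a) a := Or.inr (Or.inl ⟨s, rfl⟩)
        have hb_le_sa : leJAct sm rm (rm (sm s a) t) (sm s a) :=
          Or.inr (Or.inr (Or.inl ⟨t, rfl⟩))
        have ha_le_sa : leJAct sm rm a (sm s a) := leJ_trans' hss hrr hsr h.1 hb_le_sa
        have hL := hls a s ⟨hsa_le_a, ha_le_sa⟩
        have hR := hrs (sm s a) t ⟨hb_le_sa, leJ_trans' hss hrr hsr hsa_le_a h.1⟩
        exact ⟨sm s a, eqvL_symm' hL, eqvR_symm' hR⟩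
    · intro a b
      constructor
      · rintro ⟨rfl | ⟨s, rfl⟩, hR⟩
        · exact ⟨eqvL_refl' _, hR⟩
        · exact ⟨hls b s (eqvJ_of_eqvR' sm hR), hR⟩
      · rintro ⟨hL, hR⟩
        exact ⟨hL.1, hR⟩
    · intro a b
      constructor
      · rintro ⟨hL, rfl | ⟨t, rfl⟩⟩
        · exact ⟨hL, eqvR_refl' _⟩
        · exact ⟨hL, hrs b t (eqvJ_of_eqvL' rm hL)⟩
      · rintro ⟨hL, hR⟩
        exact ⟨hL, hR.1⟩
  · rintro ⟨hJd, h2, h3⟩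
    constructor
    · intro a s h
      obtain ⟨c, hbc, hca⟩ := (hJd (sm s a) a).1 h
      have hcla : leLAct sm c a := leL_trans' hss hbc.2 (Or.inr ⟨s, rfl⟩)
      exact eqvL_trans' hss hbc ((h2 c a).1 ⟨hcla, hca⟩).1
    · intro a t h
      obtain ⟨c, hac, hcb⟩ := (hJd a (rm a t)).1 (eqvJ_symm' h)
      have hcra : leRAct rm c a := leR_trans' hrr hcb.1 (Or.inr ⟨t, rfl⟩)
      exact eqvR_trans' hrr (eqvR_symm' hcb) ((h3 c a).1 ⟨eqvL_symm' hac, hcra⟩).2
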